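/- Let S be a circular sequence of length T ≥ 1 over a finite symbol set A with weight function w : A → ℕ, w(a) ≥ 1 for all a, in which every symbol of A occurs. Then obj(S) ≥ max over a ∈ A of w(a) · ⌈T / count_a(S)⌉. -/

import Mathlib

variable {A : Type*}

/-- The circular gap of sequence `S` at position `t` for symbol `a`:
the least positive `d` with `S ((t + d) % T) = a`. -/
noncomputable def gap {T : ℕ} (S : Fin T → A) (a : A) (t : Fin T) : ℕ :=
  sInf {d : ℕ | 0 < d ∧ S ⟨(t.val + d) % T, Nat.mod_lt _ t.pos⟩ = a}

/-- Number of positions where symbol `a` occurs in `S`. -/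
def count {T : ℕ} [DecidableEq A] (S : Fin T → A) (a : A) : ℕ :=
  (Finset.univ.filter fun t => S t = a).card

/-- `D_a(S)`: the maximum gap of symbol `a` over its positions in `S`. -/
noncomputable def Dmax {T : ℕ} [DecidableEq A] (S : Fin T → A) (a : A) : ℕ :=
  (Finset.univ.filter fun t => S t = a).sup (gap S a)

/-- Objective value: max over occurring symbols of weight times maximum gap. -/
noncomputable def obj {T : ℕ} [Fintype A] [DecidableEq A] (w : A → ℕ) (S : Fin T → A) : ℕ :=
  (Finset.univ.filter fun a => 1 ≤ count S a).sup fun a => w a * Dmax S a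

/-! Write each position `t` of the circle as `p + d`, where `p` is the last occurrence of `a`
strictly before `t` and `d` is the distance back to it. Then `1 ≤ d ≤ gap S a p ≤ Dmax S a`, and
`t ↦ (p, d)` is injective, so `T ≤ count S a * Dmax S a`, i.e. `Dmax S a ≥ ⌈T / count S a⌉`. -/

open Finset Fin.CommRing

lemma ceilDiv_le_of_le_mul {n c D : ℕ} (hc : 1 ≤ c) (h : n ≤ c * D) : (n + c - 1) / c ≤ D := by
  rw [Nat.div_le_iff_le_mul_add_pred hc]
  omega

section Cyclic

variable {T : ℕ} [NeZero T] {S : Fin T → A} {a : A}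

variable (S a) in
lemma gap_eq_sInf_add (t : Fin T) :
    gap S a t = sInf {d : ℕ | 0 < d ∧ S (t + d) = a} := by
  have hmk (d : ℕ) : (⟨(t.val + d) % T, Nat.mod_lt _ t.pos⟩ : Fin T) = t + d := by
    ext
    simp [Fin.add_def, Fin.val_natCast, Nat.add_mod_mod]
  simp only [gap, hmk]

lemma gap_pos_and_apply_add_gap {t : Fin T} (ht : S t = a) :
    0 < gap S a t ∧ S (t + gap S a t) = a := by
  rw [gap_eq_sInf_add]
  exact Nat.sInf_mem (s := {d : ℕ | 0 < d ∧ S (t + d) = a}) ⟨T, NeZero.pos T, by simpa using ht⟩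

variable (S a) in
noncomputable def prevDist (t : Fin T) : ℕ :=
  sInf {d : ℕ | 0 < d ∧ S (t - d) = a}

lemma prevDist_pos_and_apply_sub_prevDist {q : Fin T} (hq : S q = a) (t : Fin T) :
    0 < prevDist S a t ∧ S (t - prevDist S a t) = a := by
  refine Nat.sInf_mem (s := {d : ℕ | 0 < d ∧ S (t - d) = a}) ?_
  by_cases h : t = q
  · exact ⟨T, NeZero.pos T, by simpa [h] using hq⟩
  · refine ⟨(t - q).val, ?_, by simpa using hq⟩
    exact Nat.pos_of_ne_zero (Fin.val_ne_zero_iff.mpr (sub_ne_zero.mpr h))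

lemma prevDist_le_gap {q : Fin T} (hq : S q = a) (t : Fin T) :
    prevDist S a t ≤ gap S a (t - prevDist S a t) := by
  have hmin (d : ℕ) (hd : 0 < d) (h : S (t - d) = a) : prevDist S a t ≤ d := Nat.sInf_le ⟨hd, h⟩
  have hSb := (prevDist_pos_and_apply_sub_prevDist hq t).2
  generalize prevDist S a t = b at hmin hSb ⊢
  obtain ⟨hg, hSg⟩ := gap_pos_and_apply_add_gap hSb
  by_contra! hgb
  -- otherwise `t - b + gap S a (t - b)` would be an occurrence of `a` closer behind `t`
  have hcast : t - ((b - gap S a (t - b) : ℕ) : Fin T) = t - b + gap S a (t - b) := by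
    rw [Nat.cast_sub hgb.le]
    ring
  have := hmin _ (by omega) (hcast ▸ hSg)
  omega

end Cyclic

section Occurrences

variable {T : ℕ} [DecidableEq A]

lemma gap_le_Dmax {S : Fin T → A} {a : A} {t : Fin T} (ht : S t = a) : gap S a t ≤ Dmax S a :=
  le_sup (mem_filter.mpr ⟨mem_univ t, ht⟩)

theorem le_count_mul_Dmax (S : Fin T → A) (a : A) (h : 1 ≤ count S a) :
    T ≤ count S a * Dmax S a := by
  obtain ⟨q, hq⟩ := Finset.card_pos.mp h
  have hSq : S q = a := (mem_filter.mp hq).2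
  have : NeZero T := ⟨q.pos.ne'⟩
  have hmaps : ∀ t ∈ (univ : Finset (Fin T)), (t - prevDist S a t, prevDist S a t) ∈
      (univ.filter fun p => S p = a) ×ˢ Icc 1 (Dmax S a) := by
    intro t _
    obtain ⟨hpos, hocc⟩ := prevDist_pos_and_apply_sub_prevDist hSq t
    refine mem_product.mpr ⟨mem_filter.mpr ⟨mem_univ _, hocc⟩, mem_Icc.mpr ⟨hpos, ?_⟩⟩
    exact (prevDist_le_gap hSq t).trans (gap_le_Dmax hocc)
  have hinj : Set.InjOn (fun t => (t - prevDist S a t, prevDist S a t)) (univ : Finset (Fin T)) := by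
    intro t _ t' _ htt'
    obtain ⟨hsub, hdist⟩ := Prod.mk.inj htt'
    rw [hdist] at hsub
    exact sub_left_injective hsub
  simpa [count] using card_le_card_of_injOn _ hmaps hinj

end Occurrences

theorem obj_ge_ceil_bound_general {T : ℕ} [Fintype A] [DecidableEq A]
    (S : Fin T → A) (w : A → ℕ)
    (hocc : ∀ a : A, 1 ≤ count S a) :
    (Finset.univ.sup fun a => w a * ((T + count S a - 1) / count S a)) ≤ obj w S := by
  refine Finset.sup_le fun a _ => ?_
  calc w a * ((T + count S a - 1) / count S a)
      ≤ w a * Dmax S a :=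
        Nat.mul_le_mul_left _ (ceilDiv_le_of_le_mul (hocc a) (le_count_mul_Dmax S a (hocc a)))
    _ ≤ obj w S := le_sup (f := fun a => w a * Dmax S a) (mem_filter.mpr ⟨mem_univ a, hocc a⟩)

/-- lower bound on the objective value in terms of the counts. -/
theorem obj_ge_ceil_bound {T : ℕ} [Fintype A] [DecidableEq A] (hT : 1 ≤ T)
    (S : Fin T → A) (w : A → ℕ) (hw : ∀ a, 1 ≤ w a)
    (hocc : ∀ a : A, 1 ≤ count S a) :
    (Finset.univ.sup fun a => w a * ((T + count S a - 1) / count S a)) ≤ obj w S :=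
  obj_ge_ceil_bound_general S w hocc
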